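/- Let y ∈ ℝ^n, δ > 0, and let c ∈ ℝ^{2n} be any vector satisfying ‖c − S^{−1}b‖_S ≤ δ·‖S^{−1}b‖_S, where b = (y; −y) ∈ ℝ^{2n}. Then the vector f = (1/2)·[I, −I]·c ∈ ℝ^n satisfies ‖f − (I + L)^{−1} y‖_{I+L} ≤ δ·‖(I + L)^{−1} y‖_{I+L}. -/

import Mathlib

/-!
With `P = I + D - A⁺` and `N = A⁻` we have `S = [[P, N], [N, P]]`, and its quadratic form splits
along `u ± v`: `2 (u; v)ᵀ S (u; v) = ‖u + v‖²_{P+N} + ‖u - v‖²_{P-N}`. Here `P - N = I + L` and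
`P + N = I + (D - |A|)`, both positive definite because `D - B` is positive semidefinite for every
symmetric `B` whose absolute row sums are `D`. Hence `S⁻¹ (y; -y) = (w; -w)` with `w = (I + L)⁻¹ y`,
whose `S`-norm is `√2 ‖w‖_{I+L}`, while the `S`-norm of the error `c - (w; -w)` is at least
`√2 ‖f - w‖_{I+L}`; dividing the hypothesis by `√2` gives the claim.
-/

open Matrix

/-- The norm of a vector `x` with respect to a matrix `K`: `‖x‖_K = √(xᵀ K x)`. -/
noncomputable def matNorm {m : Type*} [Fintype m] (K : Matrix m m ℝ) (x : m → ℝ) : ℝ :=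
  Real.sqrt (x ⬝ᵥ K *ᵥ x)

lemma two_mul_mul_mul_le_abs_mul (b p q : ℝ) : 2 * (p * b * q) ≤ |b| * (p ^ 2 + q ^ 2) := by
  have h := two_mul_le_add_sq |p| |q|
  rw [sq_abs, sq_abs, mul_assoc] at h
  calc 2 * (p * b * q) ≤ |2 * (p * b * q)| := le_abs_self _
    _ = |b| * (2 * (|p| * |q|)) := by simp only [abs_mul, abs_two]; ring
    _ ≤ |b| * (p ^ 2 + q ^ 2) := mul_le_mul_of_nonneg_left h (abs_nonneg b)

lemma posSemidef_diagonal_sum_abs_sub {n : Type*} [Fintype n] [DecidableEq n]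
    {B : Matrix n n ℝ} (hB : B.IsSymm) :
    (diagonal (fun i => ∑ j, |B i j|) - B).PosSemidef := by
  refine .of_dotProduct_mulVec_nonneg (isHermitian_iff_isSymm.2 ((isSymm_diagonal _).sub hB))
    fun x => ?_
  have hdiag : x ⬝ᵥ diagonal (fun i => ∑ j, |B i j|) *ᵥ x = ∑ i, ∑ j, |B i j| * x i ^ 2 := by
    simp only [dotProduct, mulVec_diagonal, Finset.sum_mul, Finset.mul_sum]
    exact Finset.sum_congr rfl fun i _ => Finset.sum_congr rfl fun j _ => by ring
  have hdiag' : ∑ i, ∑ j, |B i j| * x i ^ 2 = ∑ i, ∑ j, |B i j| * x j ^ 2 := by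
    rw [Finset.sum_comm]
    simp only [hB.apply]
  have hoff : x ⬝ᵥ B *ᵥ x = ∑ i, ∑ j, x i * B i j * x j := by
    simp only [dotProduct, mulVec, Finset.mul_sum, mul_assoc]
  -- `2 xᵀ (D - B) x = ∑ i j, (|B i j| (x i² + x j²) - 2 x i B i j x j)`, termwise nonnegative.
  have hterm : ∀ i j, 0 ≤ |B i j| * (x i ^ 2 + x j ^ 2) - 2 * (x i * B i j * x j) :=
    fun i j => sub_nonneg.2 (two_mul_mul_mul_le_abs_mul _ _ _)
  have hsum := Finset.sum_nonneg fun i (_ : i ∈ Finset.univ) =>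
    Finset.sum_nonneg fun j (_ : j ∈ Finset.univ) => hterm i j
  simp only [mul_add, Finset.sum_sub_distrib, Finset.sum_add_distrib, ← Finset.mul_sum] at hsum
  rw [star_trivial, sub_mulVec, dotProduct_sub, hdiag, hoff]
  linarith

section Blocks

variable {m R : Type*} [Fintype m]

lemma fromBlocks_mulVec_sumElim_neg [Ring R] (P N : Matrix m m R) (w : m → R) :
    fromBlocks P N N P *ᵥ Sum.elim w (-w) = Sum.elim ((P - N) *ᵥ w) (-((P - N) *ᵥ w)) := by
  rw [fromBlocks_mulVec]
  simp only [Sum.elim_comp_inl, Sum.elim_comp_inr, mulVec_neg, sub_mulVec]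
  congr 1 <;> abel

lemma two_mul_sumElim_dotProduct_fromBlocks_mulVec [CommRing R] (P N : Matrix m m R)
    (u v : m → R) :
    2 * (Sum.elim u v ⬝ᵥ fromBlocks P N N P *ᵥ Sum.elim u v)
      = (u + v) ⬝ᵥ (P + N) *ᵥ (u + v) + (u - v) ⬝ᵥ (P - N) *ᵥ (u - v) := by
  rw [fromBlocks_mulVec, sumElim_dotProduct_sumElim]
  simp only [Sum.elim_comp_inl, Sum.elim_comp_inr, add_mulVec, sub_mulVec, mulVec_add,
    mulVec_sub, dotProduct_add, dotProduct_sub, add_dotProduct, sub_dotProduct]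
  ring

variable {P N : Matrix m m ℝ}

theorem Matrix.PosDef.fromBlocks_of_add_of_sub (hadd : (P + N).PosDef) (hsub : (P - N).PosDef) :
    (fromBlocks P N N P).PosDef := by
  have hsymm : ∀ i j, P j i = P i j ∧ N j i = N i j := fun i j => by
    have h₁ := hadd.1.apply i j
    have h₂ := hsub.1.apply i j
    simp only [Matrix.add_apply, Matrix.sub_apply, star_trivial] at h₁ h₂
    constructor <;> linarith
  have hP : P.IsHermitian := by ext i j; simp [(hsymm i j).1]
  have hN : Nᴴ = N := by ext i j; simp [(hsymm i j).2]
  refine .of_dotProduct_mulVec_pos (hP.fromBlocks hN hP) fun x hx => ?_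
  rw [star_trivial, ← Sum.elim_comp_inl_inr x]
  rw [← Sum.elim_comp_inl_inr x] at hx
  set u := x ∘ Sum.inl
  set v := x ∘ Sum.inr
  have hK := hadd.posSemidef.dotProduct_mulVec_nonneg (u + v)
  have hM := hsub.posSemidef.dotProduct_mulVec_nonneg (u - v)
  rw [star_trivial] at hK hM
  have key := two_mul_sumElim_dotProduct_fromBlocks_mulVec P N u v
  by_cases huv : u - v = 0
  · have hsum : u + v ≠ 0 := by
      rintro h
      have hu : u = 0 := by
        have h2u : (2 : ℝ) • u = (u + v) + (u - v) := by module
        rw [h, huv, add_zero, smul_eq_zero] at h2u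
        exact h2u.resolve_left two_ne_zero
      have hv : v = 0 := by rw [← sub_eq_zero.1 huv, hu]
      exact hx (by rw [hu, hv]; ext (_ | _) <;> rfl)
    have := hadd.dotProduct_mulVec_pos hsum
    rw [star_trivial] at this
    linarith
  · have := hsub.dotProduct_mulVec_pos huv
    rw [star_trivial] at this
    linarith

lemma matNorm_fromBlocks_sumElim_neg (w : m → ℝ) :
    matNorm (fromBlocks P N N P) (Sum.elim w (-w)) = √2 * matNorm (P - N) w := by
  have key := two_mul_sumElim_dotProduct_fromBlocks_mulVec P N w (-w)
  rw [add_neg_cancel, sub_neg_eq_add, ← two_smul ℝ w, zero_dotProduct, zero_add, mulVec_smul,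
    smul_dotProduct, dotProduct_smul, smul_eq_mul, smul_eq_mul] at key
  rw [matNorm, matNorm, ← Real.sqrt_mul zero_le_two]
  congr 1
  linarith

lemma sqrt_two_mul_matNorm_half_sub_le (hadd : (P + N).PosSemidef) (u v : m → ℝ) :
    √2 * matNorm (P - N) ((1 / 2 : ℝ) • (u - v)) ≤
      matNorm (fromBlocks P N N P) (Sum.elim u v) := by
  have key := two_mul_sumElim_dotProduct_fromBlocks_mulVec P N u v
  have hK := hadd.dotProduct_mulVec_nonneg (u + v)
  rw [star_trivial] at hK
  rw [matNorm, matNorm, ← Real.sqrt_mul zero_le_two]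
  refine Real.sqrt_le_sqrt ?_
  rw [mulVec_smul, smul_dotProduct, dotProduct_smul, smul_eq_mul, smul_eq_mul]
  linarith

theorem matNorm_half_sub_inv_mulVec_le [DecidableEq m] (hadd : (P + N).PosDef)
    (hsub : (P - N).PosDef) (y : m → ℝ) (c : m ⊕ m → ℝ) {δ : ℝ}
    (hc : matNorm (fromBlocks P N N P) (c - (fromBlocks P N N P)⁻¹ *ᵥ Sum.elim y (-y)) ≤
      δ * matNorm (fromBlocks P N N P) ((fromBlocks P N N P)⁻¹ *ᵥ Sum.elim y (-y))) :
    matNorm (P - N) ((1 / 2 : ℝ) • (c ∘ Sum.inl - c ∘ Sum.inr) - (P - N)⁻¹ *ᵥ y) ≤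
      δ * matNorm (P - N) ((P - N)⁻¹ *ᵥ y) := by
  let _ := hsub.isUnit.invertible
  let _ := (hadd.fromBlocks_of_add_of_sub hsub).isUnit.invertible
  set w := (P - N)⁻¹ *ᵥ y
  have hsol : (fromBlocks P N N P)⁻¹ *ᵥ Sum.elim y (-y) = Sum.elim w (-w) := by
    refine inv_mulVec_eq_vec ?_
    rw [fromBlocks_mulVec_sumElim_neg, mulVec_mulVec, mul_inv_of_invertible, one_mulVec]
  have hsplit : c - Sum.elim w (-w) = Sum.elim (c ∘ Sum.inl - w) (c ∘ Sum.inr + w) := by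
    ext (_ | _) <;> simp [sub_eq_add_neg]
  have hhalf : (1 / 2 : ℝ) • ((c ∘ Sum.inl - w) - (c ∘ Sum.inr + w))
      = (1 / 2 : ℝ) • (c ∘ Sum.inl - c ∘ Sum.inr) - w := by
    module
  rw [hsol, hsplit, matNorm_fromBlocks_sumElim_neg] at hc
  have := sqrt_two_mul_matNorm_half_sub_le hadd.posSemidef (c ∘ Sum.inl - w) (c ∘ Sum.inr + w)
  rw [hhalf] at this
  refine le_of_mul_le_mul_left ?_ (by positivity : (0 : ℝ) < √2)
  linarith

end Blocks

theorem stmt_12_general (n : ℕ) (A : Matrix (Fin n) (Fin n) ℝ)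
    (hAsymm : A.IsSymm)
    (Apos Aneg D L : Matrix (Fin n) (Fin n) ℝ)
    (hApos : ∀ i j, Apos i j = max (A i j) 0)
    (hAneg : ∀ i j, Aneg i j = min (A i j) 0)
    (hD : D = Matrix.diagonal fun i => ∑ j, |A i j|)
    (hL : L = D - A)
    (S : Matrix (Fin n ⊕ Fin n) (Fin n ⊕ Fin n) ℝ)
    (hS : S = Matrix.fromBlocks (1 + D - Apos) Aneg Aneg (1 + D - Apos))
    (y : Fin n → ℝ) (δ : ℝ)
    (c : Fin n ⊕ Fin n → ℝ)
    (hc : matNorm S (c - S⁻¹ *ᵥ Sum.elim y (-y)) ≤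
      δ * matNorm S (S⁻¹ *ᵥ Sum.elim y (-y)))
    (f : Fin n → ℝ)
    (hf : ∀ i, f i = (1 / 2) * (c (Sum.inl i) - c (Sum.inr i))) :
    matNorm (1 + L) (f - (1 + L)⁻¹ *ᵥ y) ≤
      δ * matNorm (1 + L) ((1 + L)⁻¹ *ᵥ y) := by
  have hsub : 1 + D - Apos - Aneg = 1 + L := by
    ext i j
    simp only [Matrix.sub_apply, Matrix.add_apply, hApos, hAneg, hL]
    linarith [min_add_max (A i j) 0]
  have hadd : 1 + D - Apos + Aneg = 1 + (D - A.map abs) := by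
    ext i j
    have habs := max_sub_min_eq_abs' (A i j) 0
    rw [sub_zero] at habs
    simp only [Matrix.sub_apply, Matrix.add_apply, map_apply, hApos, hAneg]
    linarith
  have hDabs : D = diagonal fun i => ∑ j, |A.map abs i j| := by simp [hD]
  have hL_posDef : (1 + L).PosDef :=
    PosDef.one.add_posSemidef (hL ▸ hD ▸ posSemidef_diagonal_sum_abs_sub hAsymm)
  have hQ_posDef : (1 + (D - A.map abs)).PosDef :=
    PosDef.one.add_posSemidef (hDabs ▸ posSemidef_diagonal_sum_abs_sub (hAsymm.map abs))
  have hfc : f = (1 / 2 : ℝ) • (c ∘ Sum.inl - c ∘ Sum.inr) := funext fun i => by simp [hf]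
  subst hS hfc
  rw [← hsub] at hL_posDef ⊢
  exact matNorm_half_sub_inv_mulVec_le (hadd ▸ hQ_posDef) hL_posDef y c hc

theorem stmt_12 (n : ℕ) (hn : 1 ≤ n) (A : Matrix (Fin n) (Fin n) ℝ)
    (hAsymm : A.IsSymm) (hAdiag : ∀ i, A i i = 0)
    (hAval : ∀ i j, A i j = -1 ∨ A i j = 0 ∨ A i j = 1)
    (Apos Aneg D L : Matrix (Fin n) (Fin n) ℝ)
    (hApos : ∀ i j, Apos i j = max (A i j) 0)
    (hAneg : ∀ i j, Aneg i j = min (A i j) 0)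
    (hD : D = Matrix.diagonal fun i => ∑ j, |A i j|)
    (hL : L = D - A)
    (S : Matrix (Fin n ⊕ Fin n) (Fin n ⊕ Fin n) ℝ)
    (hS : S = Matrix.fromBlocks (1 + D - Apos) Aneg Aneg (1 + D - Apos))
    (y : Fin n → ℝ) (δ : ℝ) (hδ : 0 < δ)
    (c : Fin n ⊕ Fin n → ℝ)
    (hc : matNorm S (c - S⁻¹ *ᵥ Sum.elim y (-y)) ≤
      δ * matNorm S (S⁻¹ *ᵥ Sum.elim y (-y)))
    (f : Fin n → ℝ)
    (hf : ∀ i, f i = (1 / 2) * (c (Sum.inl i) - c (Sum.inr i))) :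
    matNorm (1 + L) (f - (1 + L)⁻¹ *ᵥ y) ≤
      δ * matNorm (1 + L) ((1 + L)⁻¹ *ᵥ y) :=
  stmt_12_general n A hAsymm Apos Aneg D L hApos hAneg hD hL S hS y δ c hc f hf
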